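/- arXiv:2302.03354 — 3 statements merged into one kernel-verified Lean document; each statement's English description precedes it below -/
import Mathlib

section
/- Let λ ∈ ℝⁿ with σ₁(λ) > 0 and σ₂(λ) > 0, and μ ∈ ℝⁿ with σ₁(μ) > 0 and σ₂(μ) > 0, where σ₁ and σ₂ are the first and second elementary symmetric polynomials. Then the polarized form σ₁(λ)σ₁(μ) - Σᵢ λᵢμᵢ is strictly positive. -/
/-- The `i`-th elementary symmetric polynomial of `l : Fin n → ℝ`. -/
noncomputable def esymm (n : ℕ) (i : ℕ) (l : Fin n → ℝ) : ℝ :=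
  ∑ s ∈ Finset.univ.powersetCard i, ∏ j ∈ s, l j

lemma aux_two {α : Type*} [DecidableEq α] (s : Finset α) (l : α → ℝ) :
    2 * ∑ t ∈ s.powersetCard 2, ∏ j ∈ t, l j =
      (∑ i ∈ s, l i) ^ 2 - ∑ i ∈ s, (l i) ^ 2 := by
  induction s using Finset.induction_on with
  | empty =>
    rw [Finset.powersetCard_eq_empty.mpr (by simp)]
    simp
  | @insert a s h ih =>
    have hins : (insert a s).powersetCard 2 =
        s.powersetCard 2 ∪ (s.powersetCard 1).image (insert a) :=
      Finset.powersetCard_succ_insert h 1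
    have hdisj : Disjoint (s.powersetCard 2) ((s.powersetCard 1).image (insert a)) := by
      rw [Finset.disjoint_left]
      intro t ht ht'
      obtain ⟨u, hu, rfl⟩ := Finset.mem_image.mp ht'
      have hts : insert a u ⊆ s := (Finset.mem_powersetCard.mp ht).1
      exact h (hts (Finset.mem_insert_self a u))
    have himg : ∑ t ∈ (s.powersetCard 1).image (insert a), ∏ j ∈ t, l j
        = ∑ t ∈ s.powersetCard 1, l a * ∏ j ∈ t, l j := by
      rw [Finset.sum_image]
      · refine Finset.sum_congr rfl fun t ht => ?_
        have hat : a ∉ t := fun hat =>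
          h ((Finset.mem_powersetCard.mp ht).1 hat)
        rw [Finset.prod_insert hat]
      · intro t ht u hu htu
        have hat : a ∉ t := fun hat => h ((Finset.mem_powersetCard.mp ht).1 hat)
        have hau : a ∉ u := fun hau => h ((Finset.mem_powersetCard.mp hu).1 hau)
        have := congrArg (Finset.erase · a) htu
        simpa [Finset.erase_insert hat, Finset.erase_insert hau] using this
    have hone : ∑ t ∈ s.powersetCard 1, l a * ∏ j ∈ t, l j = l a * ∑ i ∈ s, l i := by
      rw [Finset.powersetCard_one, Finset.sum_map, Finset.mul_sum]
      simp
    rw [hins, Finset.sum_union hdisj, himg, hone, Finset.sum_insert h,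
      Finset.sum_insert h]
    ring_nf
    ring_nf at ih
    linarith [ih]

theorem garding_sigma2_polarization_pos (n : ℕ) (l m : Fin n → ℝ)
    (hl1 : 0 < esymm n 1 l) (hl2 : 0 < esymm n 2 l)
    (hm1 : 0 < esymm n 1 m) (hm2 : 0 < esymm n 2 m) :
    0 < (∑ i, l i) * (∑ i, m i) - ∑ i, l i * m i := by
  have e1l : esymm n 1 l = ∑ i, l i := by
    simp [esymm, Finset.powersetCard_one, Finset.sum_map]
  have e1m : esymm n 1 m = ∑ i, m i := by
    simp [esymm, Finset.powersetCard_one, Finset.sum_map]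
  have h2l : 2 * esymm n 2 l = (∑ i, l i) ^ 2 - ∑ i, (l i) ^ 2 := aux_two _ _
  have h2m : 2 * esymm n 2 m = (∑ i, m i) ^ 2 - ∑ i, (m i) ^ 2 := aux_two _ _
  have hcs : (∑ i, l i * m i) ^ 2 ≤ (∑ i, (l i) ^ 2) * (∑ i, (m i) ^ 2) :=
    Finset.sum_mul_sq_le_sq_mul_sq _ _ _
  have hAl : (0:ℝ) ≤ ∑ i, (l i) ^ 2 := Finset.sum_nonneg fun i _ => sq_nonneg _
  have hAm : (0:ℝ) ≤ ∑ i, (m i) ^ 2 := Finset.sum_nonneg fun i _ => sq_nonneg _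
  rw [e1l] at hl1
  rw [e1m] at hm1
  nlinarith [mul_pos hl1 hm1, hcs, hAl, hAm, hl2, hm2, h2l, h2m,
    mul_pos (mul_pos hl1 hm1) (mul_pos hl1 hm1)]
end

section
/- Let λ, μ ∈ ℝⁿ both lie in the cone Γ₂ = {λ : σ₁(λ) > 0, σ₂(λ) > 0}. Then Σ_{i≠j} λᵢμⱼ ≥ 2√(σ₂(λ)·σ₂(μ)), where σ₂(λ) = Σ_{i<j} λᵢλⱼ. In particular Γ₂ is a convex cone: λ + μ ∈ Γ₂. -/
lemma esymm_one_eq (n : ℕ) (l : Fin n → ℝ) : esymm n 1 l = ∑ i, l i := by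
  simp [esymm, Finset.powersetCard_one, Finset.sum_map]

lemma offDiag_sum (n : ℕ) (l m : Fin n → ℝ) :
    ∑ p ∈ Finset.univ.offDiag, l p.1 * m p.2
      = (∑ i, l i) * (∑ i, m i) - ∑ i, l i * m i := by
  have h1 : (∑ i, l i) * (∑ i, m i)
      = ∑ p ∈ (Finset.univ ×ˢ Finset.univ : Finset (Fin n × Fin n)), l p.1 * m p.2 := by
    rw [Finset.sum_mul_sum, Finset.sum_product]
  rw [h1, ← Finset.diag_union_offDiag (Finset.univ : Finset (Fin n)),
    Finset.sum_union (Finset.disjoint_diag_offDiag _), Finset.sum_diag]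
  ring

lemma lt_half_sum (n : ℕ) (l : Fin n → ℝ) :
    ∑ p ∈ Finset.univ.offDiag.filter (fun p : Fin n × Fin n => p.1 < p.2),
      l p.1 * l p.2 = ∑ s ∈ Finset.univ.powersetCard 2, ∏ j ∈ s, l j := by
  classical
  refine Finset.sum_bij (fun p _ => ({p.1, p.2} : Finset (Fin n))) ?_ ?_ ?_ ?_
  · intro p hp
    simp only [Finset.mem_filter, Finset.mem_offDiag, Finset.mem_univ, true_and, ne_eq] at hp
    rw [Finset.mem_powersetCard]
    exact ⟨Finset.subset_univ _, Finset.card_pair (ne_of_lt hp.2)⟩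
  · intro p hp q hq heq
    simp only [Finset.mem_filter, Finset.mem_offDiag, Finset.mem_univ, true_and, ne_eq] at hp hq
    have heq' : ({p.1, p.2} : Finset (Fin n)) = {q.1, q.2} := heq
    have h1 : p.1 ∈ ({q.1, q.2} : Finset (Fin n)) := by
      rw [← heq']; exact Finset.mem_insert_self _ _
    have h2 : p.2 ∈ ({q.1, q.2} : Finset (Fin n)) := by
      rw [← heq']; exact Finset.mem_insert_of_mem (Finset.mem_singleton_self _)
    simp only [Finset.mem_insert, Finset.mem_singleton] at h1 h2
    rcases h1 with h1 | h1 <;> rcases h2 with h2 | h2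
    · rw [h1, h2] at hp; exact absurd hp.2 (lt_irrefl _)
    · exact Prod.ext h1 h2
    · rw [h1, h2] at hp; exact absurd (hp.2.trans hq.2) (lt_irrefl _)
    · rw [h1, h2] at hp; exact absurd hp.2 (lt_irrefl _)
  · intro s hs
    rw [Finset.mem_powersetCard] at hs
    obtain ⟨a, b, hab, rfl⟩ := Finset.card_eq_two.mp hs.2
    rcases lt_or_gt_of_ne hab with h | h
    · refine ⟨(a, b), ?_, rfl⟩
      simp only [Finset.mem_filter, Finset.mem_offDiag, Finset.mem_univ, true_and, ne_eq]
      exact ⟨hab, h⟩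
    · refine ⟨(b, a), ?_, ?_⟩
      · simp only [Finset.mem_filter, Finset.mem_offDiag, Finset.mem_univ, true_and, ne_eq]
        exact ⟨hab.symm, h⟩
      · exact Finset.pair_comm b a
  · intro p hp
    simp only [Finset.mem_filter, Finset.mem_offDiag, Finset.mem_univ, true_and, ne_eq] at hp
    rw [Finset.prod_pair (ne_of_lt hp.2)]

lemma two_esymm_two (n : ℕ) (l : Fin n → ℝ) :
    2 * esymm n 2 l = ∑ p ∈ Finset.univ.offDiag, l p.1 * l p.2 := by
  classical
  have hsplit : (Finset.univ.offDiag : Finset (Fin n × Fin n))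
      = Finset.univ.offDiag.filter (fun p => p.1 < p.2)
        ∪ Finset.univ.offDiag.filter (fun p => p.2 < p.1) := by
    ext ⟨a, b⟩
    simp only [Finset.mem_union, Finset.mem_filter, Finset.mem_offDiag, Finset.mem_univ,
      true_and, ne_eq]
    constructor
    · intro h
      rcases lt_or_gt_of_ne h with h' | h'
      · exact Or.inl ⟨h, h'⟩
      · exact Or.inr ⟨h, h'⟩
    · rintro (⟨h, _⟩ | ⟨h, _⟩) <;> exact h
  have hdisj : Disjoint (Finset.univ.offDiag.filter (fun p : Fin n × Fin n => p.1 < p.2))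
      (Finset.univ.offDiag.filter (fun p => p.2 < p.1)) := by
    rw [Finset.disjoint_left]
    intro p hp1 hp2
    simp only [Finset.mem_filter] at hp1 hp2
    exact absurd (lt_trans hp1.2 hp2.2) (lt_irrefl _)
  have hswap : ∑ p ∈ Finset.univ.offDiag.filter (fun p : Fin n × Fin n => p.2 < p.1),
      l p.1 * l p.2
      = ∑ p ∈ Finset.univ.offDiag.filter (fun p : Fin n × Fin n => p.1 < p.2),
      l p.1 * l p.2 := by
    refine Finset.sum_nbij' (fun p => (p.2, p.1)) (fun p => (p.2, p.1)) ?_ ?_ ?_ ?_ ?_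
    · intro p hp
      simp only [Finset.mem_filter, Finset.mem_offDiag, Finset.mem_univ, true_and, ne_eq] at hp ⊢
      exact ⟨ne_of_lt hp.2, hp.2⟩
    · intro p hp
      simp only [Finset.mem_filter, Finset.mem_offDiag, Finset.mem_univ, true_and, ne_eq] at hp ⊢
      exact ⟨ne_of_gt hp.2, hp.2⟩
    · intro p _; rfl
    · intro p _; rfl
    · intro p _; ring
  rw [hsplit, Finset.sum_union hdisj, hswap, lt_half_sum]
  unfold esymm
  ring

lemma two_esymm_two' (n : ℕ) (l : Fin n → ℝ) :
    2 * esymm n 2 l = (∑ i, l i) ^ 2 - ∑ i, l i * l i := by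
  rw [two_esymm_two, offDiag_sum]; ring


lemma key_ineq (S T a b c e2l e2m : ℝ) (hS0 : 0 < S) (hT0 : 0 < T)
    (ha0 : 0 ≤ a) (hb0 : 0 ≤ b) (h2l : 2 * e2l = S ^ 2 - a) (h2m : 2 * e2m = T ^ 2 - b)
    (hl2 : 0 < e2l) (hm2 : 0 < e2m) (hcs : c ^ 2 ≤ a * b) :
    S * T - c ≥ 2 * Real.sqrt (e2l * e2m) := by
  have hsa : a < S ^ 2 := by nlinarith
  have hsb : b < T ^ 2 := by nlinarith
  have hsqa := Real.sq_sqrt ha0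
  have hsqb := Real.sq_sqrt hb0
  have hsqa0 := Real.sqrt_nonneg a
  have hsqb0 := Real.sqrt_nonneg b
  have hcP : c ≤ Real.sqrt a * Real.sqrt b := by
    nlinarith [mul_nonneg hsqa0 hsqb0]
  have hsaS : Real.sqrt a ≤ S := by nlinarith
  have hsbT : Real.sqrt b ≤ T := by nlinarith
  have hP_le : Real.sqrt a * Real.sqrt b ≤ S * T :=
    mul_le_mul hsaS hsbT hsqb0 hS0.le
  have hkey : (S ^ 2 - a) * (T ^ 2 - b) ≤ (S * T - Real.sqrt a * Real.sqrt b) ^ 2 := by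
    nlinarith [sq_nonneg (S * Real.sqrt b - T * Real.sqrt a)]
  have hQ : Real.sqrt ((S ^ 2 - a) * (T ^ 2 - b)) ≤ S * T - Real.sqrt a * Real.sqrt b := by
    calc Real.sqrt ((S ^ 2 - a) * (T ^ 2 - b))
        ≤ Real.sqrt ((S * T - Real.sqrt a * Real.sqrt b) ^ 2) := Real.sqrt_le_sqrt hkey
      _ = S * T - Real.sqrt a * Real.sqrt b := Real.sqrt_sq (by linarith)
  have hQeq : Real.sqrt ((S ^ 2 - a) * (T ^ 2 - b)) = 2 * Real.sqrt (e2l * e2m) := by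
    have h4 : (S ^ 2 - a) * (T ^ 2 - b) = 2 ^ 2 * (e2l * e2m) := by
      rw [← h2l, ← h2m]; ring
    rw [h4, Real.sqrt_mul (by positivity), Real.sqrt_sq (by norm_num)]
  rw [← hQeq]
  linarith

theorem garding_sigma2_and_convexity (n : ℕ) (l m : Fin n → ℝ)
    (hl1 : 0 < esymm n 1 l) (hl2 : 0 < esymm n 2 l)
    (hm1 : 0 < esymm n 1 m) (hm2 : 0 < esymm n 2 m) :
    (∑ p ∈ Finset.univ.offDiag, l p.1 * m p.2 ≥
        2 * Real.sqrt (esymm n 2 l * esymm n 2 m)) ∧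
      (0 < esymm n 1 (fun i => l i + m i) ∧ 0 < esymm n 2 (fun i => l i + m i)) := by
  have hS0 : 0 < ∑ i, l i := by rwa [esymm_one_eq] at hl1
  have hT0 : 0 < ∑ i, m i := by rwa [esymm_one_eq] at hm1
  have ha0 : 0 ≤ ∑ i, l i * l i := Finset.sum_nonneg fun i _ => mul_self_nonneg _
  have hb0 : 0 ≤ ∑ i, m i * m i := Finset.sum_nonneg fun i _ => mul_self_nonneg _
  have hcs : (∑ i, l i * m i) ^ 2 ≤ (∑ i, l i * l i) * (∑ i, m i * m i) := by
    have h := Finset.sum_mul_sq_le_sq_mul_sq Finset.univ l m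
    calc (∑ i, l i * m i) ^ 2 ≤ (∑ i, l i ^ 2) * (∑ i, m i ^ 2) := by
          simpa [mul_pow] using h
      _ = (∑ i, l i * l i) * (∑ i, m i * m i) := by simp [sq]
  have hmain : (∑ i, l i) * (∑ i, m i) - (∑ i, l i * m i)
      ≥ 2 * Real.sqrt (esymm n 2 l * esymm n 2 m) :=
    key_ineq _ _ _ _ _ _ _ hS0 hT0 ha0 hb0 (two_esymm_two' n l) (two_esymm_two' n m)
      hl2 hm2 hcs
  have hmix := offDiag_sum n l m
  have hsum : ∑ i, (l i + m i) = (∑ i, l i) + (∑ i, m i) := Finset.sum_add_distrib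
  refine ⟨by rw [hmix]; exact hmain, ?_, ?_⟩
  · rw [esymm_one_eq, hsum]; linarith
  · have h2lm := two_esymm_two' n (fun i => l i + m i)
    have hsq : ∑ i, (l i + m i) * (l i + m i)
        = (∑ i, l i * l i) + 2 * (∑ i, l i * m i) + (∑ i, m i * m i) := by
      simp only [Finset.mul_sum, ← Finset.sum_add_distrib]
      exact Finset.sum_congr rfl fun i _ => by ring
    have hsqrt0 : 0 < Real.sqrt (esymm n 2 l * esymm n 2 m) :=
      Real.sqrt_pos.mpr (by positivity)
    have hexp : 2 * esymm n 2 (fun i => l i + m i)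
        = 2 * esymm n 2 l + 2 * esymm n 2 m
          + 2 * ((∑ i, l i) * (∑ i, m i) - ∑ i, l i * m i) := by
      rw [h2lm, hsum, hsq, two_esymm_two' n l, two_esymm_two' n m]; ring
    nlinarith [hmain, hl2, hm2, hsqrt0]
end

section
/- Maclaurin's inequality: let 1 ≤ j ≤ k ≤ n and let λ ∈ ℝⁿ satisfy σᵢ(λ) > 0 for all 1 ≤ i ≤ k (i.e. λ lies in the Gårding cone Γₖ). Then (σₖ(λ)/C(n,k))^{1/k} ≤ (σⱼ(λ)/C(n,j))^{1/j}, where C(n,i) is the binomial coefficient and σᵢ is the i-th elementary symmetric polynomial. -/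
/-!
Let `E i = e i / (m choose i)` be the normalized elementary symmetric functions of a real multiset
of size `m`. Newton's inequalities `E i * E (i + 2) ≤ E (i + 1) ^ 2` are proved by descending on
`m`: differentiating `∏ (X + a)` keeps all roots real (Rolle) and preserves `E 0, …, E (m - 1)`.
When `m = i + 2`, put `q a = ∏_{b ≠ a} b`; then `e (m - 1) = ∑ q a` and
`e m * e (m - 2) = ∑_{a < b} q a * q b`, and the inequality is Cauchy–Schwarz for the `q a`.

In the Gårding cone the `E i` are positive and `E 0 = 1`, so by Newton `i ↦ log (E i)` is concave
and vanishes at `0`; hence `log (E i) / i` decreases, which is Maclaurin's inequality.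
-/

open Finset Polynomial

namespace Finset

variable {ι : Type*} [Fintype ι]

theorem two_mul_sum_powersetCard_two_prod {R : Type*} [CommRing R] (g : ι → R) :
    2 * ∑ t ∈ univ.powersetCard 2, ∏ i ∈ t, g i = (∑ i, g i) ^ 2 - ∑ i, g i ^ 2 := by
  simpa [MvPolynomial.esymm, MvPolynomial.psum, Finset.Nat.sum_antidiagonal_eq_sum_range_succ_mk,
    sum_range_succ, powersetCard_one, sq, pow_succ, sub_eq_add_neg] using
    congrArg (MvPolynomial.aeval g) (MvPolynomial.mul_esymm_eq_sum ι R 2)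

variable [DecidableEq ι]

theorem sum_powersetCard_univ_eq_sum_compl {M : Type*} [AddCommMonoid M] {k l : ℕ}
    (hkl : k + l = Fintype.card ι) (g : Finset ι → M) :
    ∑ t ∈ univ.powersetCard k, g t = ∑ t ∈ univ.powersetCard l, g tᶜ := by
  refine sum_nbij' (fun t => tᶜ) (fun t => tᶜ) ?_ ?_ ?_ ?_ ?_ <;>
    simp_all [mem_powersetCard, card_compl] <;> omega

theorem prod_compl_pair_mul_prod {R : Type*} [CommMonoid R] (f : ι → R) {a b : ι}
    (hab : a ≠ b) :
    (∏ i ∈ {a, b}ᶜ, f i) * ∏ i, f i = (∏ i ∈ {a}ᶜ, f i) * ∏ i ∈ {b}ᶜ, f i := by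
  have hb : b ∈ univ.erase a := mem_erase.2 ⟨hab.symm, mem_univ b⟩
  have ha : a ∈ univ.erase b := mem_erase.2 ⟨hab, mem_univ a⟩
  rw [compl_insert, compl_singleton, compl_singleton, ← mul_prod_erase _ f (mem_univ b),
    ← mul_prod_erase _ f ha, ← mul_prod_erase _ f hb, erase_right_comm]
  ac_rfl

end Finset

namespace Polynomial

theorem Splits.derivative {p : ℝ[X]} (hp : p.Splits) : p.derivative.Splits := by
  rw [splits_iff_card_roots] at hp ⊢
  have := card_roots_le_derivative p
  have := natDegree_derivative_le p
  have := card_roots' p.derivative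
  omega

variable {R : Type*} [CommSemiring R]

theorem natDegree_multiset_prod_X_add_C [Nontrivial R] (s : Multiset R) :
    (s.map (X + C ·)).prod.natDegree = Multiset.card s := by
  rw [natDegree_multiset_prod_of_monic _ (by simp [monic_X_add_C])]
  simp

theorem coeff_derivative_multiset_prod_X_add_C (s : Multiset R) {n k : ℕ}
    (hs : Multiset.card s = n + 1) (hk : k ≤ n) :
    (derivative (s.map (X + C ·)).prod).coeff k = s.esymm (n - k) * (k + 1) := by
  rw [coeff_derivative, Multiset.prod_X_add_C_coeff s (by omega), hs]
  congr 2
  omega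

end Polynomial

theorem Multiset.two_mul_esymm_mul_esymm_le_sq (s : Multiset ℝ) {m : ℕ}
    (hs : Multiset.card s = m + 2) :
    2 * (m + 2) * (s.esymm m * s.esymm (m + 2)) ≤ (m + 1) * s.esymm (m + 1) ^ 2 := by
  classical
  have hcard : Fintype.card s = m + 2 := by rw [Multiset.card_coe, hs]
  set f : s → ℝ := fun x => x
  have he (k : ℕ) : s.esymm k = ∑ t ∈ univ.powersetCard k, ∏ i ∈ t, f i := by
    conv_lhs => rw [← Multiset.map_univ_coe s]
    exact esymm_map_val _ _ _
  set q : s → ℝ := fun a => ∏ i ∈ {a}ᶜ, f i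
  have hsum : s.esymm (m + 1) = ∑ a, q a := by
    rw [he, sum_powersetCard_univ_eq_sum_compl (l := 1) (by omega), Finset.powersetCard_one,
      sum_map]
    rfl
  have hpairs : s.esymm m * s.esymm (m + 2) = ∑ t ∈ univ.powersetCard 2, ∏ a ∈ t, q a := by
    rw [he, he, ← hcard, ← Finset.card_univ, Finset.powersetCard_self, Finset.sum_singleton,
      sum_powersetCard_univ_eq_sum_compl (l := 2) (by omega), sum_mul]
    refine sum_congr rfl fun t ht => ?_
    obtain ⟨a, b, hab, rfl⟩ := Finset.card_eq_two.1 (Finset.mem_powersetCard.1 ht).2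
    rw [Finset.prod_pair hab, prod_compl_pair_mul_prod f hab]
  have hcs : (∑ a, q a) ^ 2 ≤ (m + 2) * ∑ a, q a ^ 2 := by
    simpa [hcard] using sq_sum_le_card_mul_sum_sq (s := univ) (f := q)
  have hid := two_mul_sum_powersetCard_two_prod q
  rw [hpairs, hsum]
  nlinarith

namespace Multiset

theorem exists_derivative_prod_X_add_C (s : Multiset ℝ) {n : ℕ} (hs : card s = n + 1) :
    ∃ t : Multiset ℝ, card t = n ∧
      derivative (s.map (X + C ·)).prod = C ((n : ℝ) + 1) * (t.map (X + C ·)).prod := by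
  set P := (s.map (X + C ·)).prod
  have htop : (derivative P).coeff n = n + 1 := by
    rw [coeff_derivative_multiset_prod_X_add_C s hs le_rfl]
    simp [esymm]
  have hdeg : (derivative P).natDegree = n := by
    refine natDegree_eq_of_le_of_coeff_ne_zero ?_ (by rw [htop]; positivity)
    have := natDegree_derivative_le P
    rw [natDegree_multiset_prod_X_add_C, hs] at this
    omega
  have hsplits : (derivative P).Splits :=
    (Splits.multisetProd (by simp [Splits.X_add_C])).derivative
  obtain ⟨t, ht⟩ := splits_iff_exists_multiset'.1 hsplits
  rw [leadingCoeff, hdeg, htop] at ht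
  refine ⟨t, ?_, ht⟩
  have := congrArg natDegree ht
  rwa [natDegree_C_mul (by positivity), natDegree_multiset_prod_X_add_C, hdeg, eq_comm] at this

theorem esymm_eq_of_derivative_prod_X_add_C {s t : Multiset ℝ} {n : ℕ}
    (hs : card s = n + 1) (ht : card t = n)
    (hst : derivative (s.map (X + C ·)).prod = C ((n : ℝ) + 1) * (t.map (X + C ·)).prod)
    {i : ℕ} (hi : i ≤ n) :
    ((n : ℝ) + 1) * t.esymm i = ((n - i : ℕ) + 1) * s.esymm i := by
  have hcoeff := congrArg (coeff · (n - i)) hst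
  rw [coeff_derivative_multiset_prod_X_add_C s hs (Nat.sub_le n i), coeff_C_mul,
    prod_X_add_C_coeff t (ht ▸ Nat.sub_le n i), ht, Nat.sub_sub_self hi] at hcoeff
  linarith

noncomputable def normalizedEsymm (s : Multiset ℝ) (i : ℕ) : ℝ :=
  s.esymm i / (card s).choose i

theorem exists_card_eq_normalizedEsymm_eq (s : Multiset ℝ) {n : ℕ} (hs : card s = n + 1) :
    ∃ t : Multiset ℝ, card t = n ∧
      ∀ i ≤ n, t.normalizedEsymm i = s.normalizedEsymm i := by
  obtain ⟨t, ht, hst⟩ := exists_derivative_prod_X_add_C s hs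
  refine ⟨t, ht, fun i hi => ?_⟩
  have hesymm := esymm_eq_of_derivative_prod_X_add_C hs ht hst hi
  have hchoose : (n.choose i : ℝ) * (n + 1) = (n + 1).choose i * ((n - i : ℕ) + 1) := by
    exact_mod_cast (Nat.choose_mul_succ_eq n i).trans (by rw [Nat.sub_add_comm hi])
  have hc : (n.choose i : ℝ) ≠ 0 := by exact_mod_cast (Nat.choose_pos hi).ne'
  have hc' : ((n + 1).choose i : ℝ) ≠ 0 := by exact_mod_cast (Nat.choose_pos (by omega)).ne'
  rw [normalizedEsymm, normalizedEsymm, ht, hs, div_eq_div_iff hc hc']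
  refine mul_left_cancel₀ (by positivity : (n : ℝ) + 1 ≠ 0) ?_
  linear_combination ((n + 1).choose i : ℝ) * hesymm - s.esymm i * hchoose

theorem normalizedEsymm_mul_le_sq_of_card_eq (s : Multiset ℝ) {i : ℕ} (hs : card s = i + 2) :
    s.normalizedEsymm i * s.normalizedEsymm (i + 2) ≤ s.normalizedEsymm (i + 1) ^ 2 := by
  have key := two_mul_esymm_mul_esymm_le_sq s hs
  have hc0 : ((i + 2).choose i : ℝ) = (i + 2) * (i + 1) / 2 := by
    rw [Nat.choose_symm_add, Nat.cast_choose_two]; push_cast; ring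
  have hc1 : ((i + 2).choose (i + 1) : ℝ) = i + 2 := by
    rw [Nat.choose_succ_self_right]; push_cast; ring
  rw [normalizedEsymm, normalizedEsymm, normalizedEsymm, hs, hc0, hc1, Nat.choose_self,
    Nat.cast_one, div_one, div_pow, div_mul_eq_mul_div,
    div_le_div_iff₀ (by positivity) (by positivity)]
  nlinarith [mul_le_mul_of_nonneg_left key (by positivity : (0 : ℝ) ≤ i + 2)]

theorem normalizedEsymm_mul_le_sq (s : Multiset ℝ) {i : ℕ} (h : i + 2 ≤ card s) :
    s.normalizedEsymm i * s.normalizedEsymm (i + 2) ≤ s.normalizedEsymm (i + 1) ^ 2 := by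
  obtain ⟨d, hd⟩ : ∃ d, card s = i + 2 + d := ⟨card s - (i + 2), by omega⟩
  induction d generalizing s with
  | zero => exact normalizedEsymm_mul_le_sq_of_card_eq s hd
  | succ d ih =>
    obtain ⟨t, ht, heq⟩ := exists_card_eq_normalizedEsymm_eq (n := i + 2 + d) s hd
    rw [← heq i (by omega), ← heq (i + 1) (by omega), ← heq (i + 2) (by omega)]
    exact ih t (by omega) ht

end Multiset

section ConcaveSequence

variable {a : ℕ → ℝ} {k : ℕ}

theorem mul_succ_le_succ_mul_of_concave (h0 : a 0 = 0)
    (hconc : ∀ i, i + 2 ≤ k → a i + a (i + 2) ≤ 2 * a (i + 1)) {i : ℕ}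
    (hi : i + 1 ≤ k) :
    i * a (i + 1) ≤ (i + 1) * a i := by
  induction i with
  | zero => simp [h0]
  | succ i ih =>
    have hconc_i := hconc i (by omega)
    have ih := ih (by omega)
    push_cast
    nlinarith

theorem antitoneOn_div_of_concave (h0 : a 0 = 0)
    (hconc : ∀ i, i + 2 ≤ k → a i + a (i + 2) ≤ 2 * a (i + 1)) :
    AntitoneOn (fun i => a i / i) (Set.Icc 1 k) := by
  refine antitoneOn_of_succ_le Set.ordConnected_Icc fun i _ hi hsucc => ?_
  rw [Order.succ_eq_add_one, Set.mem_Icc] at hsucc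
  rw [Set.mem_Icc] at hi
  have hi0 : (0 : ℝ) < i := by exact_mod_cast hi.1
  simp only [Order.succ_eq_add_one, Nat.cast_add, Nat.cast_one]
  rw [div_le_div_iff₀ (by positivity) hi0]
  linarith [mul_succ_le_succ_mul_of_concave h0 hconc hsucc.2]

end ConcaveSequence

theorem rpow_one_div_le_of_mul_le_sq {p : ℕ → ℝ} {j k : ℕ} (h0 : p 0 = 1)
    (hpos : ∀ i, 1 ≤ i → i ≤ k → 0 < p i)
    (hnewton : ∀ i, i + 2 ≤ k → p i * p (i + 2) ≤ p (i + 1) ^ 2) (hj : 1 ≤ j)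
    (hjk : j ≤ k) :
    p k ^ ((1 : ℝ) / k) ≤ p j ^ ((1 : ℝ) / j) := by
  have hpos' (i : ℕ) (hi : i ≤ k) : 0 < p i := by
    rcases Nat.eq_zero_or_pos i with rfl | hi0
    · simp [h0]
    · exact hpos i hi0 hi
  have hconc (i : ℕ) (hi : i + 2 ≤ k) :
      Real.log (p i) + Real.log (p (i + 2)) ≤ 2 * Real.log (p (i + 1)) := by
    have hi0 := hpos' i (by omega)
    have hi2 := hpos' (i + 2) hi
    calc _ = Real.log (p i * p (i + 2)) := (Real.log_mul hi0.ne' hi2.ne').symm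
      _ ≤ Real.log (p (i + 1) ^ 2) := Real.log_le_log (mul_pos hi0 hi2) (hnewton i hi)
      _ = 2 * Real.log (p (i + 1)) := by simp [Real.log_pow]
  have hslope := antitoneOn_div_of_concave (a := fun i => Real.log (p i)) (by simp [h0]) hconc
    ⟨hj, hjk⟩ ⟨hj.trans hjk, le_rfl⟩ hjk
  rw [Real.rpow_def_of_pos (hpos' k le_rfl), Real.rpow_def_of_pos (hpos' j hjk)]
  exact Real.exp_le_exp.2 (by simpa only [mul_one_div] using hslope)

theorem maclaurin_inequality (n j k : ℕ) (hj : 1 ≤ j) (hjk : j ≤ k) (hkn : k ≤ n)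
    (l : Fin n → ℝ) (hl : ∀ i : ℕ, 1 ≤ i → i ≤ k → 0 < esymm n i l) :
    (esymm n k l / (n.choose k)) ^ ((1 : ℝ) / k) ≤
      (esymm n j l / (n.choose j)) ^ ((1 : ℝ) / j) := by
  set s : Multiset ℝ := univ.val.map l
  have hcard : Multiset.card s = n := by simp [s]
  have hnorm (i : ℕ) : s.normalizedEsymm i = esymm n i l / n.choose i := by
    rw [Multiset.normalizedEsymm, hcard, Finset.esymm_map_val]
    rfl
  simp only [← hnorm]
  refine rpow_one_div_le_of_mul_le_sq ?_ (fun i hi hik => ?_) (fun i hi => ?_) hj hjk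
  · simp [Multiset.normalizedEsymm, Multiset.esymm]
  · rw [hnorm]
    exact div_pos (hl i hi hik) (by exact_mod_cast Nat.choose_pos (hik.trans hkn))
  · exact s.normalizedEsymm_mul_le_sq (by omega)
end
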